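/- arXiv:1004.3332 — 3 statements merged into one kernel-verified Lean document; each statement's English description precedes it below -/
import Mathlib

section
/- For every real-valued random variable X with E[X²] < ∞, every snr > 0, and every natural number n ≥ 0, the n-th absolute moment of the conditional-mean estimation error satisfies E[ |X − E[X | √snr·X + N]|ⁿ ] ≤ (2/√snr)ⁿ · √(n!), where N is a standard Gaussian random variable independent of X. -/
open MeasureTheory ProbabilityTheory Real

/-!
Write `𝒢` for the σ-algebra generated by `Y = √snr · X + N`. Since `Y` is `𝒢`-measurable,
`Y = E[Y | 𝒢] = √snr · E[X | 𝒢] + E[N | 𝒢]`, so the estimation error is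
`X - E[X | 𝒢] = (E[N | 𝒢] - N) / √snr`: only the noise matters. By conditional Jensen,
`E |E[N | 𝒢]|ⁿ ≤ E |N|ⁿ`, hence `E |E[N | 𝒢] - N|ⁿ ≤ 2ⁿ E |N|ⁿ`. Finally the Gaussian absolute
moments `mₙ = E |N|ⁿ = 2^(n/2) Γ((n+1)/2) / √π` satisfy `mₙ₊₂ = (n+1) mₙ`, `m₀ = 1` and
`m₁ = √(2/π) ≤ 1`, from which `mₙ² ≤ n!` follows by induction.
-/

/-- The σ-algebra generated by the observation `Y_snr = √snr · X + N`. -/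
noncomputable def obsSigma {Ω : Type*} [MeasurableSpace Ω] (N X : Ω → ℝ) (snr : ℝ) :
    MeasurableSpace Ω :=
  MeasurableSpace.comap (fun ω => Real.sqrt snr * X ω + N ω) inferInstance

/-- The minimum mean-square error of estimating `X` from `Y_snr = √snr · X + N`. -/
noncomputable def mmse {Ω : Type*} [MeasurableSpace Ω] (μ : Measure Ω)
    (N X : Ω → ℝ) (snr : ℝ) : ℝ :=
  ∫ ω, (X ω - (μ[X | obsSigma N X snr]) ω) ^ 2 ∂μ

theorem integral_abs_rpow_gaussianReal {q : ℝ} (hq : -1 < q) :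
    ∫ x, |x| ^ q ∂gaussianReal 0 1 = 2 ^ (q / 2) * Gamma ((q + 1) / 2) / √π := by
  have hdensity (x : ℝ) : gaussianPDFReal 0 1 x • |x| ^ q
      = (√(2 * π))⁻¹ * (|x| ^ q * exp (-(1 / 2) * |x| ^ (2 : ℝ))) := by
    rw [rpow_two, sq_abs, gaussianPDFReal]
    simp only [NNReal.coe_one, mul_one, sub_zero, smul_eq_mul]
    ring_nf
  rw [integral_gaussianReal_eq_integral_smul one_ne_zero, funext hdensity, integral_comp_abs
    (f := fun y => (√(2 * π))⁻¹ * (y ^ q * exp (-(1 / 2) * y ^ (2 : ℝ)))), integral_const_mul,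
    integral_rpow_mul_exp_neg_mul_rpow two_pos hq one_half_pos]
  have hscale : (1 / 2 : ℝ) ^ (-(q + 1) / 2) = 2 ^ (q / 2) * √2 := by
    rw [one_div, inv_rpow zero_le_two, ← rpow_neg zero_le_two, sqrt_eq_rpow, ← rpow_add two_pos]
    ring_nf
  rw [hscale, sqrt_mul zero_le_two]
  field_simp

theorem integral_abs_rpow_add_two_gaussianReal {q : ℝ} (hq : -1 < q) :
    ∫ x, |x| ^ (q + 2) ∂gaussianReal 0 1 = (q + 1) * ∫ x, |x| ^ q ∂gaussianReal 0 1 := by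
  rw [integral_abs_rpow_gaussianReal hq, integral_abs_rpow_gaussianReal (by linarith),
    show (q + 2 + 1) / 2 = (q + 1) / 2 + 1 by ring, Gamma_add_one (by linarith),
    show (q + 2) / 2 = q / 2 + 1 by ring, rpow_add_one two_ne_zero]
  ring

theorem sq_integral_abs_pow_gaussianReal_le_factorial :
    ∀ n : ℕ, (∫ x, |x| ^ n ∂gaussianReal 0 1) ^ 2 ≤ n.factorial
  | 0 => by simp
  | 1 => by
    have h := integral_abs_rpow_gaussianReal (q := 1) (by norm_num)
    norm_num [Gamma_one] at h
    simp only [pow_one]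
    rw [h, div_pow, ← sqrt_eq_rpow, sq_sqrt zero_le_two, sq_sqrt pi_pos.le,
      Nat.factorial_one, Nat.cast_one, div_le_one pi_pos]
    exact two_le_pi
  | n + 2 => by
    have h := integral_abs_rpow_add_two_gaussianReal (q := n)
      (neg_one_lt_zero.trans_le n.cast_nonneg)
    simp only [← Nat.cast_ofNat (R := ℝ) (n := 2), ← Nat.cast_add, rpow_natCast] at h
    rw [h, mul_pow, Nat.factorial_succ, Nat.factorial_succ]
    have ih := sq_integral_abs_pow_gaussianReal_le_factorial n
    push_cast
    nlinarith

section StandardGaussian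

variable {Ω : Type*} [MeasurableSpace Ω] {μ : Measure Ω} {N : Ω → ℝ}

theorem integrable_abs_pow_of_map_eq_gaussianReal (hNm : AEMeasurable N μ)
    (hN : μ.map N = gaussianReal 0 1) (n : ℕ) : Integrable (fun ω => |N ω| ^ n) μ := by
  have hgauss : Integrable (fun x : ℝ => |x| ^ n) (gaussianReal 0 1) := by
    simpa only [id, Real.norm_eq_abs] using
      (memLp_id_gaussianReal (μ := 0) (v := 1) n).integrable_norm_pow'
  rw [← hN] at hgauss
  exact (integrable_map_measure (by fun_prop) hNm).mp hgauss

theorem integral_abs_pow_le_sqrt_factorial_of_map_eq_gaussianReal (hNm : AEMeasurable N μ)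
    (hN : μ.map N = gaussianReal 0 1) (n : ℕ) : ∫ ω, |N ω| ^ n ∂μ ≤ √(n.factorial) := by
  rw [← integral_map (f := fun x : ℝ => |x| ^ n) hNm (by fun_prop), hN]
  exact le_sqrt_of_sq_le (sq_integral_abs_pow_gaussianReal_le_factorial n)

end StandardGaussian

section CondExp

variable {Ω : Type*} {m m0 : MeasurableSpace Ω} {μ : Measure Ω}

theorem smul_sub_condExp_ae_eq_condExp_sub (hm : m ≤ m0) [SigmaFinite (μ.trim hm)]
    {X N : Ω → ℝ} {c : ℝ} (hX : Integrable X μ) (hN : Integrable N μ)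
    (hY : StronglyMeasurable[m] (c • X + N)) :
    c • (X - μ[X | m]) =ᵐ[μ] μ[N | m] - N := by
  have hsplit : μ[c • X + N | m] =ᵐ[μ] c • μ[X | m] + μ[N | m] :=
    (condExp_add (hX.smul c) hN m).trans ((condExp_smul c X m).add Filter.EventuallyEq.rfl)
  rw [condExp_of_stronglyMeasurable hm hY ((hX.smul c).add hN)] at hsplit
  filter_upwards [hsplit] with ω hω
  simp only [Pi.add_apply, Pi.smul_apply, Pi.sub_apply, smul_eq_mul] at hω ⊢
  linarith

theorem integral_abs_sub_condExp_pow_eq_div (hm : m ≤ m0) [SigmaFinite (μ.trim hm)]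
    {X N : Ω → ℝ} {c : ℝ} (hc : 0 < c) (hX : Integrable X μ) (hN : Integrable N μ)
    (hY : StronglyMeasurable[m] (c • X + N)) (n : ℕ) :
    ∫ ω, |X ω - μ[X | m] ω| ^ n ∂μ = (∫ ω, |μ[N | m] ω - N ω| ^ n ∂μ) / c ^ n := by
  rw [← integral_div]
  refine integral_congr_ae ?_
  filter_upwards [smul_sub_condExp_ae_eq_condExp_sub hm hX hN hY] with ω hω
  simp only [Pi.smul_apply, Pi.sub_apply, smul_eq_mul] at hω
  rw [← hω, abs_mul, abs_of_pos hc, mul_pow, mul_div_cancel_left₀ _ (pow_ne_zero n hc.ne')]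

theorem integral_abs_condExp_sub_pow_le (hm : m ≤ m0) [SigmaFinite (μ.trim hm)]
    {f : Ω → ℝ} {n : ℕ} (hn : n ≠ 0) (hfn : Integrable (fun ω => |f ω| ^ n) μ) :
    ∫ ω, |μ[f | m] ω - f ω| ^ n ∂μ ≤ 2 ^ n * ∫ ω, |f ω| ^ n ∂μ := by
  have hjensen : (fun ω => |μ[f | m] ω| ^ n) ≤ᵐ[μ] μ[fun ω => |f ω| ^ n | m] := by
    have := Integrable.norm_condExp_rpow_le (f := f) (m := m) (p := n)
      (by exact_mod_cast Nat.one_le_iff_ne_zero.mpr hn)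
      (by simpa only [rpow_natCast, Real.norm_eq_abs] using hfn)
    simpa only [rpow_natCast, Real.norm_eq_abs] using this
  have hcondn : Integrable (fun ω => |μ[f | m] ω| ^ n) μ :=
    integrable_condExp.mono' ((continuous_abs.pow n).comp_aestronglyMeasurable
      integrable_condExp.aestronglyMeasurable) <| by
        filter_upwards [hjensen] with ω hω
        rwa [Real.norm_eq_abs, abs_of_nonneg (by positivity)]
  have hpoint (ω : Ω) : |μ[f | m] ω - f ω| ^ n ≤ 2 ^ (n - 1) * (|μ[f | m] ω| ^ n + |f ω| ^ n) :=
    (pow_le_pow_left₀ (abs_nonneg _) (abs_sub _ _) n).trans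
      (add_pow_le (abs_nonneg _) (abs_nonneg _) n)
  calc ∫ ω, |μ[f | m] ω - f ω| ^ n ∂μ
      ≤ ∫ ω, 2 ^ (n - 1) * (|μ[f | m] ω| ^ n + |f ω| ^ n) ∂μ :=
        integral_mono_of_nonneg (ae_of_all _ fun ω => by positivity)
          ((hcondn.add hfn).const_mul _) (ae_of_all _ hpoint)
    _ = 2 ^ (n - 1) * (∫ ω, |μ[f | m] ω| ^ n ∂μ + ∫ ω, |f ω| ^ n ∂μ) := by
        rw [integral_const_mul, integral_add hcondn hfn]
    _ ≤ 2 ^ (n - 1) * (∫ ω, |f ω| ^ n ∂μ + ∫ ω, |f ω| ^ n ∂μ) := by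
        gcongr 2 ^ (n - 1) * (?_ + _)
        exact (integral_mono_ae hcondn integrable_condExp hjensen).trans_eq (integral_condExp hm)
    _ = 2 ^ n * ∫ ω, |f ω| ^ n ∂μ := by
        rw [← two_mul, ← mul_assoc, ← pow_succ, Nat.sub_add_cancel (Nat.one_le_iff_ne_zero.mpr hn)]

end CondExp

theorem abs_moment_estimation_error_le_general {Ω : Type*} [MeasurableSpace Ω] (μ : Measure Ω)
    [IsProbabilityMeasure μ] (X N : Ω → ℝ) (hXm : Measurable X) (hNm : Measurable N)
    (hX2 : MemLp X 2 μ) (hN : Measure.map N μ = gaussianReal 0 1)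
    (snr : ℝ) (hsnr : 0 < snr) (n : ℕ) :
    ∫ ω, |X ω - (μ[X | obsSigma N X snr]) ω| ^ n ∂μ
      ≤ (2 / Real.sqrt snr) ^ n * Real.sqrt (Nat.factorial n) := by
  rcases eq_or_ne n 0 with rfl | hn
  · simp
  have hm : obsSigma N X snr ≤ ‹MeasurableSpace Ω› := ((hXm.const_mul _).add hNm).comap_le
  have hNn := integrable_abs_pow_of_map_eq_gaussianReal hNm.aemeasurable hN
  have hsqrt : 0 < √snr := sqrt_pos.mpr hsnr
  calc ∫ ω, |X ω - (μ[X | obsSigma N X snr]) ω| ^ n ∂μ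
      = (∫ ω, |(μ[N | obsSigma N X snr]) ω - N ω| ^ n ∂μ) / √snr ^ n :=
        integral_abs_sub_condExp_pow_eq_div hm hsqrt (hX2.integrable one_le_two)
          ((integrable_norm_iff hNm.aestronglyMeasurable).mp (by simpa using hNn 1))
          (Measurable.of_comap_le le_rfl).stronglyMeasurable n
    _ ≤ 2 ^ n * (∫ ω, |N ω| ^ n ∂μ) / √snr ^ n := by
        gcongr
        exact integral_abs_condExp_sub_pow_le hm hn (hNn n)
    _ ≤ 2 ^ n * √(n.factorial) / √snr ^ n := by
        gcongr
        exact integral_abs_pow_le_sqrt_factorial_of_map_eq_gaussianReal hNm.aemeasurable hN n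
    _ = (2 / √snr) ^ n * √(n.factorial) := by
        rw [div_pow]
        ring

theorem abs_moment_estimation_error_le {Ω : Type*} [MeasurableSpace Ω] (μ : Measure Ω)
    [IsProbabilityMeasure μ] (X N : Ω → ℝ) (hXm : Measurable X) (hNm : Measurable N)
    (hX2 : MemLp X 2 μ) (hN : Measure.map N μ = gaussianReal 0 1)
    (hindep : IndepFun X N μ) (snr : ℝ) (hsnr : 0 < snr) (n : ℕ) :
    ∫ ω, |X ω - (μ[X | obsSigma N X snr]) ω| ^ n ∂μ
      ≤ (2 / Real.sqrt snr) ^ n * Real.sqrt (Nat.factorial n) :=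
  abs_moment_estimation_error_le_general μ X N hXm hNm hX2 hN snr hsnr n
end

section
/- (Sub-Gaussianity of the posterior) Let X be a real-valued random variable, N a standard Gaussian random variable independent of X, a ≠ 0, and Y = aX + N. For every y ∈ ℝ let X_y be a random variable distributed according to the regular conditional distribution of X given Y = y. Then X_y is sub-Gaussian for every y ∈ ℝ; more precisely, for all x > 0, P(|X_y| ≥ x) ≤ √(2/π) · (e^{y²/2} / h₀(y; a)) · e^{−a²x²/4}; for every n = 1, 2, …, E[|X_y|ⁿ] ≤ (n · e^{y²/2} / h₀(y; a)) · (√2/|a|)ⁿ · √((n−1)!); and E[|X_y − E[X_y]|ⁿ] ≤ 2ⁿ · E[|X_y|ⁿ]. -/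
open MeasureTheory ProbabilityTheory Real

/-! Since `(y - a t)² ≥ a² t² / 2 - y²`, the likelihood `φ(y - a t)` is at most
`e^{y²/2} e^{-a² t² / 4} / √(2π)`, a Gaussian in `t` whatever the prior `ν` is. Dividing by the
normalising constant `h₀(y; a)` gives the tail bound, and `u^{2n} e^{-u²} ≤ n!` bounds
`|t|ⁿ e^{-a² t² / 4}` uniformly in `t`, which gives the moment bound. The centred moments follow
from `|t - m|ⁿ ≤ 2ⁿ (|t|ⁿ + |m|ⁿ) / 2` and Jensen's inequality `|m|ⁿ ≤ E|X_y|ⁿ`. -/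

/-- The standard Gaussian density `φ(t) = (2π)^{-1/2} e^{-t²/2}`. -/
noncomputable def stdGaussPdf (t : ℝ) : ℝ := Real.exp (-(t ^ 2) / 2) / Real.sqrt (2 * Real.pi)

/-- `h₀(y; a) = E[φ(y - aX)]`, the density of `Y = aX + N` at `y`,
where `ν` is the law of `X`. -/
noncomputable def h0 (ν : Measure ℝ) (y a : ℝ) : ℝ := ∫ x, stdGaussPdf (y - a * x) ∂ν

/-- The posterior distribution of `X` given `Y = aX + N = y`, where `ν` is the (prior) law
of `X`: it has density `φ(y - a x) / h₀(y; a)` with respect to `ν`. -/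
noncomputable def posterior (ν : Measure ℝ) (y a : ℝ) : Measure ℝ :=
  (ENNReal.ofReal (h0 ν y a))⁻¹ •
    ν.withDensity (fun x => ENNReal.ofReal (stdGaussPdf (y - a * x)))

lemma stdGaussPdf_pos (t : ℝ) : 0 < stdGaussPdf t := by
  unfold stdGaussPdf; positivity

@[fun_prop]
lemma continuous_stdGaussPdf : Continuous stdGaussPdf := by
  unfold stdGaussPdf; fun_prop

lemma stdGaussPdf_sub_mul_le (y a t : ℝ) :
    stdGaussPdf (y - a * t) ≤ exp (y ^ 2 / 2) * exp (-(a ^ 2 * t ^ 2) / 4) / √(2 * π) := by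
  unfold stdGaussPdf
  gcongr
  rw [← exp_add]
  exact exp_le_exp.mpr (by nlinarith [sq_nonneg (y - a * t / 2)])

lemma pow_mul_exp_neg_sq_div_two_le_sqrt_factorial {u : ℝ} (hu : 0 ≤ u) (n : ℕ) :
    u ^ n * exp (-(u ^ 2) / 2) ≤ √(n.factorial) := by
  have taylor : (u ^ 2) ^ n ≤ n.factorial * exp (u ^ 2) :=
    (div_le_iff₀' (by positivity)).mp (pow_div_factorial_le_exp _ (sq_nonneg u) n)
  rw [le_sqrt (by positivity) (by positivity)]
  calc (u ^ n * exp (-(u ^ 2) / 2)) ^ 2 = (u ^ 2) ^ n / exp (u ^ 2) := by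
        rw [mul_pow, ← pow_mul, ← pow_mul, mul_comm n, sq (exp _), ← exp_add, add_halves,
          exp_neg, div_eq_mul_inv]
    _ ≤ (n.factorial : ℝ) := (div_le_iff₀ (exp_pos _)).mpr taylor

lemma abs_pow_mul_exp_neg_le {a : ℝ} (ha : a ≠ 0) (t : ℝ) (n : ℕ) :
    |t| ^ n * exp (-(a ^ 2 * t ^ 2) / 4) ≤ (√2 / |a|) ^ n * √(n.factorial) := by
  set u := |a| * |t| / √2
  have ht : |t| = √2 / |a| * u := by simp only [u]; field_simp
  have hu : -(a ^ 2 * t ^ 2) / 4 = -(u ^ 2) / 2 := by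
    simp only [u, div_pow, mul_pow, sq_abs, sq_sqrt (zero_le_two (α := ℝ))]; ring
  rw [ht, hu, mul_pow, mul_assoc]
  exact mul_le_mul_of_nonneg_left
    (pow_mul_exp_neg_sq_div_two_le_sqrt_factorial (by positivity) n) (by positivity)

lemma stdGaussPdf_sub_mul_mul_abs_pow_le {a : ℝ} (ha : a ≠ 0) (y t : ℝ) (n : ℕ) :
    stdGaussPdf (y - a * t) * |t| ^ n ≤
      exp (y ^ 2 / 2) / √(2 * π) * ((√2 / |a|) ^ n * √(n.factorial)) :=
  calc stdGaussPdf (y - a * t) * |t| ^ n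
      ≤ exp (y ^ 2 / 2) * exp (-(a ^ 2 * t ^ 2) / 4) / √(2 * π) * |t| ^ n := by
        gcongr; exact stdGaussPdf_sub_mul_le y a t
    _ = exp (y ^ 2 / 2) / √(2 * π) * (|t| ^ n * exp (-(a ^ 2 * t ^ 2) / 4)) := by ring
    _ ≤ exp (y ^ 2 / 2) / √(2 * π) * ((√2 / |a|) ^ n * √(n.factorial)) :=
        mul_le_mul_of_nonneg_left (abs_pow_mul_exp_neg_le ha t n) (by positivity)

lemma sqrt_factorial_le_mul_sqrt_factorial_pred {n : ℕ} (hn : 1 ≤ n) :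
    √(n.factorial) ≤ n * √((n - 1).factorial) := by
  rw [← Nat.mul_factorial_pred (by omega), Nat.cast_mul, sqrt_mul (Nat.cast_nonneg _)]
  gcongr
  exact sqrt_le_left (by positivity) |>.mpr (by norm_cast; nlinarith)

lemma one_le_sqrt_two_mul_pi : 1 ≤ √(2 * π) :=
  one_le_sqrt.mpr (by linarith [pi_gt_three])

lemma inv_sqrt_two_mul_pi_le_sqrt_two_div_pi : (√(2 * π))⁻¹ ≤ √(2 / π) := by
  have hprod : √(2 / π) * √(2 * π) = 2 := by
    rw [← sqrt_mul (by positivity), show 2 / π * (2 * π) = 2 ^ 2 by field_simp,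
      sqrt_sq zero_le_two]
  rw [inv_le_iff_one_le_mul₀ (by positivity), hprod]
  exact one_le_two

lemma integral_abs_sub_integral_pow_le {Ω : Type*} [MeasurableSpace Ω] {P : Measure Ω}
    [IsProbabilityMeasure P] {f : Ω → ℝ} (hf : Integrable f P) {n : ℕ}
    (hfn : Integrable (fun ω => |f ω| ^ n) P) :
    ∫ ω, |f ω - ∫ ω', f ω' ∂P| ^ n ∂P ≤ 2 ^ n * ∫ ω, |f ω| ^ n ∂P := by
  set m := ∫ ω, f ω ∂P
  have jensen : |m| ^ n ≤ ∫ ω, |f ω| ^ n ∂P :=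
    calc |m| ^ n ≤ (∫ ω, |f ω| ∂P) ^ n := by
          gcongr; exact abs_integral_le_integral_abs
      _ ≤ ∫ ω, |f ω| ^ n ∂P :=
          (convexOn_pow n).map_integral_le (continuousOn_pow n) isClosed_Ici
            (ae_of_all _ fun ω => abs_nonneg (f ω)) hf.abs hfn
  have pointwise (ω : Ω) : |f ω - m| ^ n ≤ 2 ^ n * ((|f ω| ^ n + |m| ^ n) / 2) := by
    have hconv : (1 / 2 * |f ω| + 1 / 2 * |m|) ^ n ≤ 1 / 2 * |f ω| ^ n + 1 / 2 * |m| ^ n :=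
      (convexOn_pow n).2 (abs_nonneg (f ω)) (abs_nonneg m) one_half_pos.le one_half_pos.le
        (add_halves 1)
    calc |f ω - m| ^ n ≤ (|f ω| + |m|) ^ n := by gcongr; exact abs_sub _ _
      _ = 2 ^ n * (1 / 2 * |f ω| + 1 / 2 * |m|) ^ n := by rw [← mul_pow]; ring_nf
      _ ≤ 2 ^ n * ((|f ω| ^ n + |m| ^ n) / 2) := by gcongr; linarith
  calc ∫ ω, |f ω - m| ^ n ∂P
      ≤ ∫ ω, 2 ^ n * ((|f ω| ^ n + |m| ^ n) / 2) ∂P :=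
        integral_mono_of_nonneg (ae_of_all _ fun ω => by positivity)
          (((hfn.add (integrable_const _)).div_const 2).const_mul _) (ae_of_all _ pointwise)
    _ = 2 ^ n * ((∫ ω, |f ω| ^ n ∂P + |m| ^ n) / 2) := by
        rw [integral_const_mul, integral_div, integral_add hfn (integrable_const _),
          integral_const, probReal_univ, one_smul]
    _ ≤ 2 ^ n * ∫ ω, |f ω| ^ n ∂P := by gcongr; linarith

section Posterior

variable (ν : Measure ℝ) [IsProbabilityMeasure ν] (y a : ℝ)

lemma integrable_stdGaussPdf_sub_mul : Integrable (fun t => stdGaussPdf (y - a * t)) ν := by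
  refine Integrable.mono' (integrable_const (1 / √(2 * π))) (by fun_prop) (ae_of_all _ fun t => ?_)
  rw [norm_of_nonneg (stdGaussPdf_pos _).le, stdGaussPdf]
  gcongr
  exact exp_le_one_iff.mpr (by nlinarith [sq_nonneg (y - a * t)])

lemma h0_pos : 0 < h0 ν y a := by
  rw [h0, integral_pos_iff_support_of_nonneg (fun t => (stdGaussPdf_pos _).le)
    (integrable_stdGaussPdf_sub_mul ν y a)]
  simp [Function.support, (stdGaussPdf_pos _).ne']

instance : IsProbabilityMeasure (posterior ν y a) := by
  constructor
  rw [_root_.posterior, Measure.smul_apply, withDensity_apply _ MeasurableSet.univ,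
    Measure.restrict_univ, ← ofReal_integral_eq_lintegral_ofReal
      (integrable_stdGaussPdf_sub_mul ν y a) (ae_of_all _ fun t => (stdGaussPdf_pos _).le)]
  exact ENNReal.inv_mul_cancel (ENNReal.ofReal_pos.mpr (h0_pos ν y a)).ne' ENNReal.ofReal_ne_top

lemma integral_posterior (g : ℝ → ℝ) :
    ∫ t, g t ∂(posterior ν y a) = (h0 ν y a)⁻¹ * ∫ t, stdGaussPdf (y - a * t) * g t ∂ν := by
  rw [_root_.posterior, integral_smul_measure, ENNReal.toReal_inv,
    ENNReal.toReal_ofReal (h0_pos ν y a).le, smul_eq_mul,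
    integral_withDensity_eq_integral_toReal_smul (by fun_prop)
      (ae_of_all _ fun _ => ENNReal.ofReal_lt_top)]
  simp only [ENNReal.toReal_ofReal (stdGaussPdf_pos _).le, smul_eq_mul]

variable {ν y a}

lemma integral_posterior_le {g : ℝ → ℝ} (hg : ∀ t, 0 ≤ g t) {K : ℝ}
    (hK : ∀ t, stdGaussPdf (y - a * t) * g t ≤ K) :
    ∫ t, g t ∂(posterior ν y a) ≤ K / h0 ν y a := by
  rw [integral_posterior, inv_mul_eq_div]
  refine div_le_div_of_nonneg_right ?_ (h0_pos ν y a).le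
  calc ∫ t, stdGaussPdf (y - a * t) * g t ∂ν
      ≤ ∫ _, K ∂ν := integral_mono_of_nonneg
        (ae_of_all _ fun t => mul_nonneg (stdGaussPdf_pos _).le (hg t)) (integrable_const K)
        (ae_of_all _ hK)
    _ = K := by simp

lemma integrable_posterior {g : ℝ → ℝ} (hg : Measurable g) {K : ℝ}
    (hK : ∀ t, stdGaussPdf (y - a * t) * |g t| ≤ K) : Integrable g (posterior ν y a) := by
  rw [_root_.posterior, integrable_smul_measure (ENNReal.inv_ne_zero.mpr ENNReal.ofReal_ne_top)
    (ENNReal.inv_ne_top.mpr (ENNReal.ofReal_pos.mpr (h0_pos ν y a)).ne'),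
    integrable_withDensity_iff (by fun_prop) (ae_of_all _ fun _ => ENNReal.ofReal_lt_top)]
  simp only [ENNReal.toReal_ofReal (stdGaussPdf_pos _).le]
  refine Integrable.mono' (integrable_const K) (by fun_prop) (ae_of_all _ fun t => ?_)
  rw [norm_mul, norm_of_nonneg (stdGaussPdf_pos _).le,
    mul_comm, Real.norm_eq_abs]
  exact hK t

lemma integrable_abs_pow_posterior (ha : a ≠ 0) (n : ℕ) :
    Integrable (fun t => |t| ^ n) (posterior ν y a) :=
  integrable_posterior (by fun_prop) fun t => by
    simpa only [abs_pow, abs_abs] using stdGaussPdf_sub_mul_mul_abs_pow_le ha y t n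

lemma integrable_id_posterior (ha : a ≠ 0) : Integrable id (posterior ν y a) :=
  integrable_posterior measurable_id fun t => by
    simpa only [pow_one, id] using stdGaussPdf_sub_mul_mul_abs_pow_le ha y t 1

lemma posterior_tail_le {x : ℝ} (hx : 0 ≤ x) :
    posterior ν y a {t | x ≤ |t|} ≤ ENNReal.ofReal (√(2 / π) * (exp (y ^ 2 / 2) / h0 ν y a) *
      exp (-(a ^ 2 * x ^ 2) / 4)) := by
  set S := {t : ℝ | x ≤ |t|}
  have hS : MeasurableSet S := measurableSet_le measurable_const (by fun_prop)
  have likelihood_le (t : ℝ) : stdGaussPdf (y - a * t) * S.indicator 1 t ≤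
      exp (y ^ 2 / 2) * exp (-(a ^ 2 * x ^ 2) / 4) / √(2 * π) := by
    by_cases ht : t ∈ S
    · have hsq : x ^ 2 ≤ t ^ 2 := by simpa only [sq_abs] using pow_le_pow_left₀ hx ht 2
      rw [Set.indicator_of_mem ht, Pi.one_apply, mul_one]
      refine (stdGaussPdf_sub_mul_le y a t).trans ?_
      gcongr exp (y ^ 2 / 2) * exp ?_ / _
      nlinarith [mul_le_mul_of_nonneg_left hsq (sq_nonneg a)]
    · rw [Set.indicator_of_notMem ht, mul_zero]
      positivity
  have := h0_pos ν y a
  rw [← ofReal_measureReal, ← integral_indicator_one hS]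
  refine ENNReal.ofReal_le_ofReal ?_
  calc ∫ t, S.indicator 1 t ∂(posterior ν y a)
      ≤ exp (y ^ 2 / 2) * exp (-(a ^ 2 * x ^ 2) / 4) / √(2 * π) / h0 ν y a :=
        integral_posterior_le (Set.indicator_nonneg fun _ _ => zero_le_one) likelihood_le
    _ = (√(2 * π))⁻¹ * (exp (y ^ 2 / 2) / h0 ν y a) * exp (-(a ^ 2 * x ^ 2) / 4) := by ring
    _ ≤ √(2 / π) * (exp (y ^ 2 / 2) / h0 ν y a) * exp (-(a ^ 2 * x ^ 2) / 4) := by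
        gcongr; exact inv_sqrt_two_mul_pi_le_sqrt_two_div_pi

lemma integral_abs_pow_posterior_le (ha : a ≠ 0) {n : ℕ} (hn : 1 ≤ n) :
    ∫ t, |t| ^ n ∂(posterior ν y a) ≤
      n * exp (y ^ 2 / 2) / h0 ν y a * (√2 / |a|) ^ n * √((n - 1).factorial) := by
  refine (integral_posterior_le (fun t => by positivity)
    fun t => stdGaussPdf_sub_mul_mul_abs_pow_le ha y t n).trans ?_
  have := h0_pos ν y a
  calc exp (y ^ 2 / 2) / √(2 * π) * ((√2 / |a|) ^ n * √(n.factorial)) / h0 ν y a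
      = exp (y ^ 2 / 2) / h0 ν y a * (√2 / |a|) ^ n * (√(n.factorial) / √(2 * π)) := by ring
    _ ≤ exp (y ^ 2 / 2) / h0 ν y a * (√2 / |a|) ^ n * (n * √((n - 1).factorial)) := by
        gcongr
        exact (div_le_self (sqrt_nonneg _) one_le_sqrt_two_mul_pi).trans
          (sqrt_factorial_le_mul_sqrt_factorial_pred hn)
    _ = n * exp (y ^ 2 / 2) / h0 ν y a * (√2 / |a|) ^ n * √((n - 1).factorial) := by ring

end Posterior

theorem posterior_subGaussian_general {Ω : Type*} [MeasurableSpace Ω] (μ : Measure Ω)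
    [IsProbabilityMeasure μ] (X : Ω → ℝ) (hXm : Measurable X)
    (a : ℝ) (ha : a ≠ 0) (y : ℝ) :
    -- `X_y` is sub-Gaussian
    (∃ c C : ℝ, 0 < c ∧ 0 < C ∧ ∀ lam : ℝ, 0 < lam →
        posterior (Measure.map X μ) y a {x | lam < |x|}
          ≤ ENNReal.ofReal (C * Real.exp (-c * lam ^ 2))) ∧
    -- quantitative tail bound
    (∀ x : ℝ, 0 < x →
        posterior (Measure.map X μ) y a {t | x ≤ |t|}
          ≤ ENNReal.ofReal (Real.sqrt (2 / Real.pi) * (Real.exp (y ^ 2 / 2) /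
              h0 (Measure.map X μ) y a) * Real.exp (-(a ^ 2 * x ^ 2) / 4))) ∧
    -- moment bound
    (∀ n : ℕ, 1 ≤ n →
        ∫ t, |t| ^ n ∂(posterior (Measure.map X μ) y a)
          ≤ n * Real.exp (y ^ 2 / 2) / h0 (Measure.map X μ) y a *
              (Real.sqrt 2 / |a|) ^ n * Real.sqrt (Nat.factorial (n - 1))) ∧
    -- central moment bound
    (∀ n : ℕ, 1 ≤ n →
        ∫ t, |t - ∫ s, s ∂(posterior (Measure.map X μ) y a)| ^ n
            ∂(posterior (Measure.map X μ) y a)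
          ≤ 2 ^ n * ∫ t, |t| ^ n ∂(posterior (Measure.map X μ) y a)) := by
  have := Measure.isProbabilityMeasure_map (μ := μ) hXm.aemeasurable
  have := h0_pos (Measure.map X μ) y a
  refine ⟨⟨a ^ 2 / 4, √(2 / π) * (exp (y ^ 2 / 2) / h0 (Measure.map X μ) y a),
      by positivity, by positivity, fun lam hlam => ?_⟩,
    fun x hx => posterior_tail_le hx.le,
    fun n hn => integral_abs_pow_posterior_le ha hn,
    fun n _ => integral_abs_sub_integral_pow_le (integrable_id_posterior ha)
      (integrable_abs_pow_posterior ha n)⟩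
  calc posterior (Measure.map X μ) y a {x | lam < |x|}
      ≤ posterior (Measure.map X μ) y a {t | lam ≤ |t|} :=
        measure_mono fun t (ht : lam < |t|) => ht.le
    _ ≤ _ := posterior_tail_le hlam.le
    _ = _ := by ring_nf

/-- **Sub-Gaussianity of the posterior.** -/
theorem posterior_subGaussian {Ω : Type*} [MeasurableSpace Ω] (μ : Measure Ω)
    [IsProbabilityMeasure μ] (X N : Ω → ℝ) (hXm : Measurable X) (hNm : Measurable N)
    (hN : Measure.map N μ = gaussianReal 0 1) (hindep : IndepFun X N μ)
    (a : ℝ) (ha : a ≠ 0) (y : ℝ) :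
    -- `X_y` is sub-Gaussian
    (∃ c C : ℝ, 0 < c ∧ 0 < C ∧ ∀ lam : ℝ, 0 < lam →
        posterior (Measure.map X μ) y a {x | lam < |x|}
          ≤ ENNReal.ofReal (C * Real.exp (-c * lam ^ 2))) ∧
    -- quantitative tail bound
    (∀ x : ℝ, 0 < x →
        posterior (Measure.map X μ) y a {t | x ≤ |t|}
          ≤ ENNReal.ofReal (Real.sqrt (2 / Real.pi) * (Real.exp (y ^ 2 / 2) /
              h0 (Measure.map X μ) y a) * Real.exp (-(a ^ 2 * x ^ 2) / 4))) ∧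
    -- moment bound
    (∀ n : ℕ, 1 ≤ n →
        ∫ t, |t| ^ n ∂(posterior (Measure.map X μ) y a)
          ≤ n * Real.exp (y ^ 2 / 2) / h0 (Measure.map X μ) y a *
              (Real.sqrt 2 / |a|) ^ n * Real.sqrt (Nat.factorial (n - 1))) ∧
    -- central moment bound
    (∀ n : ℕ, 1 ≤ n →
        ∫ t, |t - ∫ s, s ∂(posterior (Measure.map X μ) y a)| ^ n
            ∂(posterior (Measure.map X μ) y a)
          ≤ 2 ^ n * ∫ t, |t| ^ n ∂(posterior (Measure.map X μ) y a)) :=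
  posterior_subGaussian_general μ X hXm a ha y
end

section
/- (Concavity of the MMSE in the input distribution) Let X₀ and X₁ be real-valued random variables with E[X₀²] < ∞ and E[X₁²] < ∞, let α ∈ [0, 1], and let Z be a real-valued random variable whose law is the mixture α·P_{X₀} + (1 − α)·P_{X₁}. Then for every snr ≥ 0, mmse(Z, snr) ≥ α·mmse(X₀, snr) + (1 − α)·mmse(X₁, snr). -/
open MeasureTheory ProbabilityTheory Real

/-! The conditional mean of `Z` given its observation is `g (√snr · Z + N)` for a measurable `g`,
so `mmse Z` is the mean-square error of the estimator `g`. Because the noise is independent of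
the input, the joint law of (input, observation) is the image of (input law) ⊗ (noise law), hence
affine in the input law: the error of `g` for `Z` is the `α`, `1 - α` mixture of its errors for
`X₀` and `X₁`. Each of these is at least the corresponding MMSE, as conditional expectation is the
orthogonal projection onto the measurable functions of the observation in `L²`. Errors are taken
as lintegrals in `ℝ≥0∞`, so that an estimator which is not square integrable needs no special
case. -/

section L2Projection

variable {Ω : Type*} {m m₀ : MeasurableSpace Ω} {μ : Measure Ω}

lemma MeasureTheory.L2.integral_sq_eq_norm_sq_of_ae_eq {F : Ω →₂[μ] ℝ} {u : Ω → ℝ}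
    (hFu : F =ᵐ[μ] u) :
    ∫ ω, u ω ^ 2 ∂μ = ‖F‖ ^ 2 := by
  rw [← real_inner_self_eq_norm_sq, L2.inner_def]
  refine integral_congr_ae ?_
  filter_upwards [hFu] with ω hω
  simp [hω, sq]

variable [IsFiniteMeasure μ] {f h : Ω → ℝ}

lemma integral_sq_sub_condExp_le (hm : m ≤ m₀) (hf : MemLp f 2 μ) (hh : MemLp h 2 μ)
    (hhm : AEStronglyMeasurable[m] h μ) :
    ∫ ω, (f ω - μ[f|m] ω) ^ 2 ∂μ ≤ ∫ ω, (f ω - h ω) ^ 2 ∂μ := by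
  have : Fact (m ≤ m₀) := ⟨hm⟩
  set K := lpMeas ℝ ℝ m 2 μ
  have hhK : hh.toLp h ∈ K :=
    mem_lpMeas_iff_aestronglyMeasurable.mpr (hhm.congr hh.coeFn_toLp.symm)
  have hP : (hf.toLp f - K.starProjection (hf.toLp f) : Ω →₂[μ] ℝ) =ᵐ[μ]
      fun ω => f ω - μ[f|m] ω := by
    filter_upwards [Lp.coeFn_sub (hf.toLp f) (K.starProjection (hf.toLp f)), hf.coeFn_toLp,
      hf.condExpL2_ae_eq_condExp (𝕜 := ℝ) hm] with ω h₁ h₂ h₃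
    rw [h₁, Pi.sub_apply, h₂, ← h₃, Submodule.starProjection_apply]
    rfl
  have hH : (hf.toLp f - hh.toLp h : Ω →₂[μ] ℝ) =ᵐ[μ] fun ω => f ω - h ω := by
    filter_upwards [Lp.coeFn_sub (hf.toLp f) (hh.toLp h), hf.coeFn_toLp, hh.coeFn_toLp]
      with ω h₁ h₂ h₃
    rw [h₁, Pi.sub_apply, h₂, h₃]
  rw [L2.integral_sq_eq_norm_sq_of_ae_eq hP, L2.integral_sq_eq_norm_sq_of_ae_eq hH]
  have hmin : ‖hf.toLp f - K.starProjection (hf.toLp f)‖ ≤ ‖hf.toLp f - hh.toLp h‖ := by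
    rw [Submodule.starProjection_minimal]
    exact ciInf_le ⟨0, Set.forall_mem_range.mpr fun _ => norm_nonneg _⟩ (⟨_, hhK⟩ : K)
  exact pow_le_pow_left₀ (norm_nonneg _) hmin 2

lemma ofReal_integral_sq_sub_condExp_le_lintegral (hm : m ≤ m₀) (hf : MemLp f 2 μ)
    (hhm : AEStronglyMeasurable[m] h μ) :
    ENNReal.ofReal (∫ ω, (f ω - μ[f|m] ω) ^ 2 ∂μ) ≤
      ∫⁻ ω, ENNReal.ofReal ((f ω - h ω) ^ 2) ∂μ := by
  by_cases hfin : ∫⁻ ω, ENNReal.ofReal ((f ω - h ω) ^ 2) ∂μ = ⊤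
  · simp [hfin]
  have hfh : MemLp (fun ω => f ω - h ω) 2 μ := by
    have hfhm := hf.1.sub (hhm.mono hm)
    refine (memLp_two_iff_integrable_sq hfhm).2 ⟨hfhm.pow 2, ?_⟩
    exact (hasFiniteIntegral_iff_ofReal (ae_of_all _ fun _ => sq_nonneg _)).2 (Ne.lt_top hfin)
  have hh : MemLp h 2 μ := (hf.sub hfh).ae_eq (ae_of_all _ fun ω => sub_sub_cancel (f ω) (h ω))
  rw [← ofReal_integral_eq_lintegral_ofReal hfh.integrable_sq
    (ae_of_all _ fun _ => sq_nonneg _)]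
  exact ENNReal.ofReal_le_ofReal (integral_sq_sub_condExp_le hm hf hh hhm)

end L2Projection

section Mixture

variable {Ω α β γ : Type*} [MeasurableSpace Ω] [MeasurableSpace α] [MeasurableSpace β]
  [MeasurableSpace γ] {μ : Measure Ω}

lemma memLp_two_of_map_eq_mix {X₀ X₁ Z : Ω → ℝ} (hX₀ : MemLp X₀ 2 μ) (hX₁ : MemLp X₁ 2 μ)
    (hX₀m : AEMeasurable X₀ μ) (hX₁m : AEMeasurable X₁ μ) (hZm : AEMeasurable Z μ)
    {a b : ENNReal} (ha : a ≠ ⊤) (hb : b ≠ ⊤) (hmix : μ.map Z = a • μ.map X₀ + b • μ.map X₁) :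
    MemLp Z 2 μ := by
  have hsq : Measurable fun x : ℝ => x ^ 2 := measurable_id.pow_const 2
  rw [memLp_two_iff_integrable_sq hZm.aestronglyMeasurable]
  change Integrable ((fun x : ℝ => x ^ 2) ∘ Z) μ
  rw [← integrable_map_measure hsq.aestronglyMeasurable hZm, hmix]
  exact (((integrable_map_measure hsq.aestronglyMeasurable hX₀m).2
      hX₀.integrable_sq).smul_measure ha).add_measure
    (((integrable_map_measure hsq.aestronglyMeasurable hX₁m).2
      hX₁.integrable_sq).smul_measure hb)

variable [IsFiniteMeasure μ]

lemma ProbabilityTheory.IndepFun.map_comp_prodMk_eq {X : Ω → α} {N : Ω → β}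
    (hXN : IndepFun X N μ) (hX : Measurable X) (hN : Measurable N) {F : α × β → γ}
    (hF : Measurable F) :
    μ.map (fun ω => F (X ω, N ω)) = ((μ.map X).prod (μ.map N)).map F := by
  rw [← (indepFun_iff_map_prod_eq_prod_map_map hX.aemeasurable hN.aemeasurable).1 hXN,
    Measure.map_map hF (hX.prodMk hN)]
  rfl

lemma map_comp_prodMk_eq_mix_of_indepFun {X₀ X₁ Z : Ω → α} {N : Ω → β}
    (hX₀ : Measurable X₀) (hX₁ : Measurable X₁) (hZ : Measurable Z) (hN : Measurable N)
    (hX₀N : IndepFun X₀ N μ) (hX₁N : IndepFun X₁ N μ) (hZN : IndepFun Z N μ)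
    {a b : ENNReal} (hmix : μ.map Z = a • μ.map X₀ + b • μ.map X₁)
    {F : α × β → γ} (hF : Measurable F) :
    μ.map (fun ω => F (Z ω, N ω)) =
      a • μ.map (fun ω => F (X₀ ω, N ω)) + b • μ.map (fun ω => F (X₁ ω, N ω)) := by
  rw [hZN.map_comp_prodMk_eq hZ hN hF, hX₀N.map_comp_prodMk_eq hX₀ hN hF,
    hX₁N.map_comp_prodMk_eq hX₁ hN hF, hmix, Measure.add_prod, Measure.prod_smul_left,
    Measure.prod_smul_left, Measure.map_add _ _ hF, Measure.map_smul, Measure.map_smul]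

end Mixture

section MMSE

variable {Ω : Type*} [MeasurableSpace Ω] {μ : Measure Ω} {N X : Ω → ℝ}

lemma mmse_nonneg (snr : ℝ) : 0 ≤ mmse μ N X snr :=
  integral_nonneg fun _ => sq_nonneg _

lemma exists_ofReal_mmse_eq_lintegral_map (hX : MemLp X 2 μ) (hXm : Measurable X)
    (hNm : Measurable N) (snr : ℝ) :
    ∃ g : ℝ → ℝ, Measurable g ∧ ENNReal.ofReal (mmse μ N X snr) =
      ∫⁻ p, ENNReal.ofReal ((p.1 - g p.2) ^ 2) ∂(μ.map fun ω => (X ω, √snr * X ω + N ω)) := by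
  have hY : Measurable fun ω => √snr * X ω + N ω := by fun_prop
  obtain ⟨g, hg, hcond⟩ := (stronglyMeasurable_condExp (m := obsSigma N X snr) (f := X)
    (μ := μ)).exists_eq_measurable_comp
  refine ⟨g, hg.measurable, ?_⟩
  rw [lintegral_map (by fun_prop) (hXm.prodMk hY), mmse,
    ofReal_integral_eq_lintegral_ofReal
      (f := fun ω => (X ω - μ[X|obsSigma N X snr] ω) ^ 2)
      (hX.sub (hX.condExp one_le_two)).integrable_sq (ae_of_all _ fun _ => sq_nonneg _), hcond]
  rfl

variable [IsFiniteMeasure μ]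

lemma ofReal_mmse_le_lintegral_map (hX : MemLp X 2 μ) (hXm : Measurable X) (hNm : Measurable N)
    (snr : ℝ) {g : ℝ → ℝ} (hg : Measurable g) :
    ENNReal.ofReal (mmse μ N X snr) ≤
      ∫⁻ p, ENNReal.ofReal ((p.1 - g p.2) ^ 2) ∂(μ.map fun ω => (X ω, √snr * X ω + N ω)) := by
  have hY : Measurable fun ω => √snr * X ω + N ω := by fun_prop
  rw [lintegral_map (by fun_prop) (hXm.prodMk hY)]
  exact ofReal_integral_sq_sub_condExp_le_lintegral hY.comap_le hX
    (hg.comp (comap_measurable _)).aestronglyMeasurable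

end MMSE

theorem mmse_concave_in_distribution_general {Ω : Type*} [MeasurableSpace Ω] (μ : Measure Ω)
    [IsProbabilityMeasure μ] (X₀ X₁ Z N : Ω → ℝ)
    (hX₀m : Measurable X₀) (hX₁m : Measurable X₁) (hZm : Measurable Z) (hNm : Measurable N)
    (hX₀2 : MemLp X₀ 2 μ) (hX₁2 : MemLp X₁ 2 μ)
    (hindep₀ : IndepFun X₀ N μ) (hindep₁ : IndepFun X₁ N μ) (hindepZ : IndepFun Z N μ)
    (α : ℝ) (hα : α ∈ Set.Icc (0 : ℝ) 1)
    (hmix : Measure.map Z μ =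
      ENNReal.ofReal α • Measure.map X₀ μ + ENNReal.ofReal (1 - α) • Measure.map X₁ μ)
    (snr : ℝ) :
    α * mmse μ N X₀ snr + (1 - α) * mmse μ N X₁ snr ≤ mmse μ N Z snr := by
  obtain ⟨hα₀, hα₁⟩ := hα
  have hZ2 : MemLp Z 2 μ := memLp_two_of_map_eq_mix hX₀2 hX₁2 hX₀m.aemeasurable
    hX₁m.aemeasurable hZm.aemeasurable ENNReal.ofReal_ne_top ENNReal.ofReal_ne_top hmix
  obtain ⟨g, hg, hZg⟩ := exists_ofReal_mmse_eq_lintegral_map hZ2 hZm hNm snr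
  have hlaw := map_comp_prodMk_eq_mix_of_indepFun hX₀m hX₁m hZm hNm hindep₀ hindep₁ hindepZ
    hmix (F := fun p : ℝ × ℝ => (p.1, √snr * p.1 + p.2)) (by fun_prop)
  rw [← ENNReal.ofReal_le_ofReal_iff (mmse_nonneg snr), hZg, hlaw, lintegral_add_measure,
    lintegral_smul_measure, lintegral_smul_measure, smul_eq_mul, smul_eq_mul,
    ENNReal.ofReal_add (mul_nonneg hα₀ (mmse_nonneg snr))
      (mul_nonneg (sub_nonneg.2 hα₁) (mmse_nonneg snr)),
    ENNReal.ofReal_mul hα₀, ENNReal.ofReal_mul (sub_nonneg.2 hα₁)]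
  gcongr
  · exact ofReal_mmse_le_lintegral_map hX₀2 hX₀m hNm snr hg
  · exact ofReal_mmse_le_lintegral_map hX₁2 hX₁m hNm snr hg

/-- **Concavity of the MMSE in the input distribution.** If the law of `Z` is the mixture
`α · P_{X₀} + (1 - α) · P_{X₁}`, then
`mmse(Z, snr) ≥ α · mmse(X₀, snr) + (1 - α) · mmse(X₁, snr)`. -/
theorem mmse_concave_in_distribution {Ω : Type*} [MeasurableSpace Ω] (μ : Measure Ω)
    [IsProbabilityMeasure μ] (X₀ X₁ Z N : Ω → ℝ)
    (hX₀m : Measurable X₀) (hX₁m : Measurable X₁) (hZm : Measurable Z) (hNm : Measurable N)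
    (hX₀2 : MemLp X₀ 2 μ) (hX₁2 : MemLp X₁ 2 μ)
    (hN : Measure.map N μ = gaussianReal 0 1)
    (hindep₀ : IndepFun X₀ N μ) (hindep₁ : IndepFun X₁ N μ) (hindepZ : IndepFun Z N μ)
    (α : ℝ) (hα : α ∈ Set.Icc (0 : ℝ) 1)
    (hmix : Measure.map Z μ =
      ENNReal.ofReal α • Measure.map X₀ μ + ENNReal.ofReal (1 - α) • Measure.map X₁ μ)
    (snr : ℝ) (hsnr : 0 ≤ snr) :
    α * mmse μ N X₀ snr + (1 - α) * mmse μ N X₁ snr ≤ mmse μ N Z snr :=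
  mmse_concave_in_distribution_general μ X₀ X₁ Z N hX₀m hX₁m hZm hNm hX₀2 hX₁2 hindep₀ hindep₁
    hindepZ α hα hmix snr
end
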